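/- The bilinear product on the 3-dimensional vector space with basis (e1, e2, d) defined by e1·e1 = d, e2·e2 = d, d·e1 = e2, d·e2 = -e1 (all other products of basis vectors zero) is left symmetric and its commutator bracket agrees with the Lie bracket of e(2). -/
import Mathlib


namespace Stmt2
noncomputable section

/-- Product on `e(2)` with basis `e1, e2, d` (coords 0,1,2):
`e1·e1 = d`, `e2·e2 = d`, `d·e1 = e2`, `d·e2 = -e1`, other products of basis vectors zero. -/
def mul (x y : Fin 3 → ℝ) : Fin 3 → ℝ :=
  ![-(x 2 * y 1), x 2 * y 0, x 0 * y 0 + x 1 * y 1]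

def e1 : Fin 3 → ℝ := ![1, 0, 0]
def e2 : Fin 3 → ℝ := ![0, 1, 0]
def d : Fin 3 → ℝ := ![0, 0, 1]

theorem stmt2 :
    (∀ x y z : Fin 3 → ℝ,
      mul (mul x y) z - mul x (mul y z) = mul (mul y x) z - mul y (mul x z)) ∧
    mul d e1 - mul e1 d = e2 ∧
    mul d e2 - mul e2 d = -e1 ∧
    mul e1 e2 - mul e2 e1 = 0 := by
  refine ⟨fun x y z => ?_, ?_, ?_, ?_⟩ <;>
    funext i <;> fin_cases i <;>
    simp [mul, e1, e2, d, Matrix.cons_val_zero, Matrix.cons_val_one] <;> ring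

end
end Stmt2
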